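/- arXiv:2010.09521 — 5 statements merged into one kernel-verified Lean document; each statement's English description precedes it below -/
import Mathlib

section
/- Let g(x) = sinh²(x)·cosh(x) + x·sinh(x) − 2x²·cosh(x). Then g(x) > 0 for all x > 0. -/
/-!
Write `g x = cosh x * (sinh x ^ 2 - 2 * x ^ 2) + x * sinh x`. When `sinh x ^ 2 ≥ 2 * x ^ 2` both
terms are nonnegative and the second is positive. Otherwise the first term is negative, and
`cosh x ≤ 1 + sinh x ^ 2 / 2` (from `cosh² = 1 + sinh²`) bounds `g x` below by a polynomial in
`s = sinh x` and `x`; this polynomial is increasing in `s ≥ x` and already positive at the Taylor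
lower bound `s = x + x ^ 3 / 6`.
-/

open Real Finset

lemma add_cube_div_six_le_sinh {x : ℝ} (hx : 0 ≤ x) : x + x ^ 3 / 6 ≤ sinh x := by
  have h := sum_le_hasSum (range 2) (fun n _ => by positivity) (hasSum_sinh x)
  norm_num [sum_range_succ, Nat.factorial] at h
  linarith

lemma cosh_le_one_add_sinh_sq_div_two (x : ℝ) : cosh x ≤ 1 + sinh x ^ 2 / 2 := by
  nlinarith [cosh_sq x, cosh_pos x, sq_nonneg (sinh x), sq_nonneg (sinh x ^ 2)]

lemma one_add_sq_div_two_mul_sub_add_mul_pos {x s : ℝ} (hx : 0 < x) (hs : x + x ^ 3 / 6 ≤ s) :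
    0 < (1 + s ^ 2 / 2) * (s ^ 2 - 2 * x ^ 2) + x * s := by
  have hx₀ : x ≤ x + x ^ 3 / 6 := by linarith [pow_pos hx 3]
  have hxs₀ : x ^ 2 ≤ (x + x ^ 3 / 6) ^ 2 := by gcongr
  have hxs : x ^ 2 ≤ s ^ 2 := hxs₀.trans (by gcongr)
  have h_mono : 0 ≤ (s - (x + x ^ 3 / 6)) *
      ((s + (x + x ^ 3 / 6)) * ((s ^ 2 + (x + x ^ 3 / 6) ^ 2) / 2 + 1 - x ^ 2) + x) := by
    refine mul_nonneg (sub_nonneg.2 hs) ?_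
    have : 0 ≤ s + (x + x ^ 3 / 6) := by linarith
    nlinarith
  -- the value at `s = x + x ^ 3 / 6`: all terms of order at most `x ^ 4` cancel
  have h_base : 0 < x ^ 6 / 36 + x ^ 8 / 18 + x ^ 10 / 108 + x ^ 12 / 2592 := by positivity
  linear_combination h_mono + h_base

theorem g_pos (g : ℝ → ℝ)
    (hg : ∀ x, g x = (Real.sinh x)^2 * Real.cosh x + x * Real.sinh x
      - 2 * x^2 * Real.cosh x) :
    ∀ x > 0, g x > 0 := by
  intro x hx
  have h_eq : g x = cosh x * (sinh x ^ 2 - 2 * x ^ 2) + x * sinh x := by rw [hg]; ring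
  rw [h_eq, gt_iff_lt]
  rcases le_or_gt (2 * x ^ 2) (sinh x ^ 2) with h | h
  · have : 0 ≤ cosh x * (sinh x ^ 2 - 2 * x ^ 2) := mul_nonneg (cosh_pos x).le (by linarith)
    linarith [mul_pos hx (sinh_pos_iff.2 hx)]
  · calc 0 < (1 + sinh x ^ 2 / 2) * (sinh x ^ 2 - 2 * x ^ 2) + x * sinh x :=
          one_add_sq_div_two_mul_sub_add_mul_pos hx (add_cube_div_six_le_sinh hx.le)
      _ ≤ cosh x * (sinh x ^ 2 - 2 * x ^ 2) + x * sinh x :=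
          add_le_add_left (mul_le_mul_of_nonpos_right (cosh_le_one_add_sinh_sq_div_two x)
            (sub_nonpos.2 h.le)) _
end

section
/- Let g(x) = sinh²(x)·cosh(x) + x·sinh(x) − 2x²·cosh(x). Then the third derivative of g is strictly positive for all x > 0, and g(0) = g'(0) = g''(0) = 0. -/
/-!
Using `cosh² = 1 + sinh²`, the third derivative of `g` is
`27 sinh³ x + 11 sinh x - 11 x cosh x - 2 x² sinh x`. For `x > 0` the estimate
`cosh x ≤ 1 + x sinh x` bounds it below by `sinh x (27 sinh² x - 13 x²) + 11 (sinh x - x)`,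
which is positive because `sinh x > x`.
-/

open Real

lemma cosh_le_one_add_mul_sinh {x : ℝ} (hx : 0 ≤ x) : cosh x ≤ 1 + x * sinh x := by
  have hexp : exp x * exp (-x) = 1 := by rw [← exp_add, add_neg_cancel, exp_zero]
  have hu : 1 ≤ exp x := one_le_exp hx
  have hux : exp x * (1 - x) ≤ 1 + x := by
    nlinarith [add_one_le_exp (-x), exp_pos x]
  rw [cosh_eq, sinh_eq]
  -- multiplied by `exp x`, the claim is `(exp x - 1) * (1 + x - exp x * (1 - x)) ≥ 0`
  nlinarith [mul_nonneg (mul_nonneg (exp_pos (-x)).le (sub_nonneg.2 hu)) (sub_nonneg.2 hux)]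

noncomputable def gFun (x : ℝ) : ℝ := sinh x ^ 2 * cosh x + x * sinh x - 2 * x ^ 2 * cosh x

lemma deriv_gFun :
    deriv gFun = fun x => 3 * sinh x ^ 3 + 3 * sinh x - 3 * x * cosh x - 2 * x ^ 2 * sinh x := by
  funext x
  have h : HasDerivAt (fun y => sinh y ^ 2 * cosh y + y * sinh y - 2 * y ^ 2 * cosh y) _ x :=
    ((((hasDerivAt_sinh x).pow 2).mul (hasDerivAt_cosh x)).add
      ((hasDerivAt_id x).mul (hasDerivAt_sinh x))).sub
      ((((hasDerivAt_id x).pow 2).const_mul 2).mul (hasDerivAt_cosh x))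
  refine (h.congr_deriv ?_).deriv
  simp only [Pi.pow_apply, id]
  linear_combination (2 * sinh x) * cosh_sq x

lemma deriv_deriv_gFun :
    deriv (deriv gFun) = fun x => 9 * sinh x ^ 2 * cosh x - 7 * x * sinh x - 2 * x ^ 2 * cosh x := by
  rw [deriv_gFun]
  funext x
  have h := ((((((hasDerivAt_sinh x).pow 3).const_mul 3).add
      ((hasDerivAt_sinh x).const_mul 3)).sub
      (((hasDerivAt_id x).const_mul 3).mul (hasDerivAt_cosh x))).sub
      ((((hasDerivAt_id x).pow 2).const_mul 2).mul (hasDerivAt_sinh x)))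
  refine (h.congr_deriv ?_).deriv
  simp only [Pi.pow_apply, id]
  ring

lemma deriv_deriv_deriv_gFun :
    deriv (deriv (deriv gFun)) =
      fun x => 27 * sinh x ^ 3 + 11 * sinh x - 11 * x * cosh x - 2 * x ^ 2 * sinh x := by
  rw [deriv_deriv_gFun]
  funext x
  have h := (((((hasDerivAt_sinh x).pow 2).const_mul 9).mul (hasDerivAt_cosh x)).sub
      (((hasDerivAt_id x).const_mul 7).mul (hasDerivAt_sinh x))).sub
      ((((hasDerivAt_id x).pow 2).const_mul 2).mul (hasDerivAt_cosh x))
  refine (h.congr_deriv ?_).deriv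
  simp only [Pi.pow_apply, id]
  linear_combination (18 * sinh x) * cosh_sq x

lemma deriv_deriv_deriv_gFun_pos {x : ℝ} (hx : 0 < x) : 0 < deriv (deriv (deriv gFun)) x := by
  rw [deriv_deriv_deriv_gFun]
  have hs : x < sinh x := self_lt_sinh_iff.2 hx
  have hxc : x * cosh x ≤ x + x ^ 2 * sinh x := by
    nlinarith [mul_le_mul_of_nonneg_left (cosh_le_one_add_mul_sinh hx.le) hx.le]
  have hsx : 0 < sinh x * (27 * sinh x ^ 2 - 13 * x ^ 2) := by
    have : x ^ 2 < sinh x ^ 2 := by gcongr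
    exact mul_pos (hx.trans hs) (by nlinarith [sq_nonneg x])
  nlinarith

theorem g_third_deriv_pos (g : ℝ → ℝ)
    (hg : ∀ x, g x = (Real.sinh x)^2 * Real.cosh x + x * Real.sinh x
      - 2 * x^2 * Real.cosh x) :
    (∀ x > 0, deriv (deriv (deriv g)) x > 0) ∧
      g 0 = 0 ∧ deriv g 0 = 0 ∧ deriv (deriv g) 0 = 0 := by
  obtain rfl : g = gFun := funext hg
  exact ⟨fun x hx => deriv_deriv_deriv_gFun_pos hx, by simp [gFun], by simp [deriv_gFun],
    by simp [deriv_deriv_gFun]⟩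
end

section
/- Fix σ > 0, g > 0, h > 0 with σ/(g·h²) > 1/3. Then the function λ(k) = (σk + g/k)·tanh(kh), defined for k > 0, is strictly increasing on (0, ∞). -/
/-!
Writing `x = k h`, one finds
`k² cosh² x · λ'(k) = σ k² (sinh x cosh x + x) - g (sinh x cosh x - x)`.
Since `sinh x cosh x > x`, after multiplying by `h²` this is positive as soon as
`3 (sinh x cosh x - x) ≤ x² (sinh x cosh x + x)`, because `g h² < 3 σ`. With `y = 2 x` that
inequality reads `(12 - y²) sinh y ≤ y³ + 12 y`, which follows by differentiating four times:
every derivative vanishes at `0`, and the fourth one is `-y² sinh y - 8 y cosh y ≤ 0`.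
-/

open Real Set

lemma nonpos_of_hasDerivAt_nonpos {f f' : ℝ → ℝ} (hf : ∀ x, HasDerivAt f (f' x) x)
    (hf' : ∀ x, 0 < x → f' x ≤ 0) (h0 : f 0 ≤ 0) : ∀ x, 0 ≤ x → f x ≤ 0 := by
  have hanti : AntitoneOn f (Ici 0) := by
    refine antitoneOn_of_hasDerivWithinAt_nonpos (convex_Ici 0)
      (fun y _ => (hf y).continuousAt.continuousWithinAt) (fun y _ => (hf y).hasDerivWithinAt) ?_
    rw [interior_Ici]
    exact hf'
  exact fun x hx => (hanti self_mem_Ici hx hx).trans h0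

lemma twelve_sub_sq_mul_sinh_le {y : ℝ} (hy : 0 ≤ y) : (12 - y ^ 2) * sinh y ≤ y ^ 3 + 12 * y := by
  -- `h3, …, h0` are the successive derivatives of `(12 - y²) sinh y - y³ - 12 y`, down to itself.
  have h3 : ∀ y : ℝ, 0 ≤ y → (6 - y ^ 2) * cosh y - 6 * y * sinh y - 6 ≤ 0 := by
    refine nonpos_of_hasDerivAt_nonpos (f' := fun y => -(y ^ 2 * sinh y) - 8 * (y * cosh y))
      (fun y => ?_) (fun y hy => ?_) (by simp)
    · exact ((((hasDerivAt_pow 2 y).const_sub 6).mul (hasDerivAt_cosh y)).sub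
        (((hasDerivAt_id' y).const_mul 6).mul (hasDerivAt_sinh y))).sub_const 6
        |>.congr_deriv (by push_cast; ring)
    · nlinarith [mul_nonneg (sq_nonneg y) (sinh_nonneg_iff.2 hy.le), mul_pos hy (cosh_pos y)]
  have h2 : ∀ y : ℝ, 0 ≤ y → (10 - y ^ 2) * sinh y - 4 * y * cosh y - 6 * y ≤ 0 := by
    refine nonpos_of_hasDerivAt_nonpos (fun y => ?_) (fun y hy => h3 y hy.le) (by simp)
    exact ((((hasDerivAt_pow 2 y).const_sub 10).mul (hasDerivAt_sinh y)).sub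
      (((hasDerivAt_id' y).const_mul 4).mul (hasDerivAt_cosh y))).sub
      ((hasDerivAt_id' y).const_mul 6) |>.congr_deriv (by push_cast; ring)
  have h1 : ∀ y : ℝ, 0 ≤ y → (12 - y ^ 2) * cosh y - 2 * y * sinh y - 3 * y ^ 2 - 12 ≤ 0 := by
    refine nonpos_of_hasDerivAt_nonpos (fun y => ?_) (fun y hy => h2 y hy.le) (by simp)
    exact ((((hasDerivAt_pow 2 y).const_sub 12).mul (hasDerivAt_cosh y)).sub
      (((hasDerivAt_id' y).const_mul 2).mul (hasDerivAt_sinh y))).sub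
      ((hasDerivAt_pow 2 y).const_mul 3) |>.sub_const 12 |>.congr_deriv (by push_cast; ring)
  have h0 : ∀ y : ℝ, 0 ≤ y → (12 - y ^ 2) * sinh y - y ^ 3 - 12 * y ≤ 0 := by
    refine nonpos_of_hasDerivAt_nonpos (fun y => ?_) (fun y hy => h1 y hy.le) (by simp)
    exact ((((hasDerivAt_pow 2 y).const_sub 12).mul (hasDerivAt_sinh y)).sub
      (hasDerivAt_pow 3 y)).sub ((hasDerivAt_id' y).const_mul 12)
      |>.congr_deriv (by push_cast; ring)
  linarith [h0 y hy]

lemma three_mul_sinh_mul_cosh_sub_le {x : ℝ} (hx : 0 ≤ x) :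
    3 * (sinh x * cosh x - x) ≤ x ^ 2 * (sinh x * cosh x + x) := by
  have h := twelve_sub_sq_mul_sinh_le (mul_nonneg zero_le_two hx)
  rw [sinh_two_mul] at h
  linear_combination h / 8

lemma Real.hasDerivAt_tanh (x : ℝ) : HasDerivAt tanh (1 / cosh x ^ 2) x := by
  rw [show tanh = fun y => sinh y / cosh y from funext tanh_eq_sinh_div_cosh]
  refine ((hasDerivAt_sinh x).div (hasDerivAt_cosh x) (cosh_pos x).ne').congr_deriv ?_
  rw [← cosh_sq_sub_sinh_sq x]
  ring

lemma hasDerivAt_dispersion_relation (σ g h : ℝ) {k : ℝ} (hk : k ≠ 0) :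
    HasDerivAt (fun k => (σ * k + g / k) * tanh (k * h))
      ((σ - g / k ^ 2) * tanh (k * h) + (σ * k + g / k) * (h / cosh (k * h) ^ 2)) k := by
  have hfactor :=
    ((hasDerivAt_id' k).const_mul σ).add ((hasDerivAt_const k g).div (hasDerivAt_id' k) hk)
  have htanh := (hasDerivAt_tanh (k * h)).comp k ((hasDerivAt_id' k).mul_const h)
  refine (hfactor.mul htanh).congr_deriv ?_
  simp only [Function.comp_apply, Pi.add_apply, Pi.div_apply]
  field_simp
  ring

lemma dispersion_relation_deriv_pos {σ g h k : ℝ} (hσ : 0 < σ) (hh : 0 < h) (hk : 0 < k)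
    (hgh : g * h ^ 2 < 3 * σ) :
    0 < (σ - g / k ^ 2) * tanh (k * h) + (σ * k + g / k) * (h / cosh (k * h) ^ 2) := by
  set x := k * h with hx_def
  have hx : 0 < x := mul_pos hk hh
  have hsc : x < sinh x * cosh x :=
    (self_lt_sinh_iff.2 hx).trans_le (le_mul_of_one_le_right (sinh_pos_iff.2 hx).le (one_le_cosh x))
  have hnum : 0 < (σ * k ^ 2 - g) * (sinh x * cosh x) + (σ * k ^ 2 + g) * x := by
    refine pos_of_mul_pos_right (a := h ^ 2) ?_ (sq_nonneg h)
    have hexpand : h ^ 2 * ((σ * k ^ 2 - g) * (sinh x * cosh x) + (σ * k ^ 2 + g) * x) =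
        σ * (x ^ 2 * (sinh x * cosh x + x)) - g * h ^ 2 * (sinh x * cosh x - x) := by
      rw [hx_def]; ring
    rw [hexpand]
    nlinarith [mul_le_mul_of_nonneg_left (three_mul_sinh_mul_cosh_sub_le hx.le) hσ.le,
      mul_pos (sub_pos.2 hgh) (sub_pos.2 hsc)]
  have hcosh := cosh_pos x
  calc 0 < ((σ * k ^ 2 - g) * (sinh x * cosh x) + (σ * k ^ 2 + g) * x) / (k ^ 2 * cosh x ^ 2) := by
        positivity
    _ = _ := by rw [tanh_eq_sinh_div_cosh, hx_def]; field_simp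

theorem lambda_strict_mono_general (σ g h : ℝ) (hσ : σ > 0) (hh : h > 0)
    (hcond : σ / (g * h^2) > 1/3) :
    StrictMonoOn (fun k : ℝ => (σ * k + g / k) * Real.tanh (k * h))
      (Set.Ioi (0 : ℝ)) := by
  have hgh_pos : 0 < g * h ^ 2 :=
    (div_pos_iff_of_pos_left hσ).1 ((by norm_num : (0 : ℝ) < 1 / 3).trans hcond)
  have hgh : g * h ^ 2 < 3 * σ := by
    rw [gt_iff_lt, lt_div_iff₀ hgh_pos] at hcond
    linarith
  have hderiv (k : ℝ) (hk : k ∈ Ioi 0) := hasDerivAt_dispersion_relation σ g h (ne_of_gt hk)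
  exact strictMonoOn_of_hasDerivWithinAt_pos (convex_Ioi 0)
    (fun k hk => (hderiv k hk).continuousAt.continuousWithinAt)
    (fun k hk => (hderiv k (interior_subset hk)).hasDerivWithinAt)
    (fun k hk => dispersion_relation_deriv_pos hσ hh (interior_subset hk) hgh)

theorem lambda_strict_mono (σ g h : ℝ) (hσ : σ > 0) (hg : g > 0) (hh : h > 0)
    (hcond : σ / (g * h^2) > 1/3) :
    StrictMonoOn (fun k : ℝ => (σ * k + g / k) * Real.tanh (k * h))
      (Set.Ioi (0 : ℝ)) :=
  lambda_strict_mono_general σ g h hσ hh hcond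
end

section
/- Fix h > 0, k > 0, σ > 0, g > 0 with C := k²σ/g > 1/2. For every integer n ≥ 2, E(n) := C·(n·tanh(nkh) − tanh(kh)) + tanh(nkh)/n − tanh(kh) > 0. -/
/-!
With `t = tanh (k h)` and `T = tanh (n k h)` we have `0 < t ≤ T` since `tanh` is increasing.
Multiplying by `n`, `n E(n) = C (n² T - n t) + T - n t`, and as `n² T - n t > 0` and `C > 1/2`,
`2 n E(n) > (n² + 2) T - 3 n t ≥ (n² - 3 n + 2) t = (n - 1)(n - 2) t ≥ 0`.
-/

namespace Real

theorem tanh_strictMono : StrictMono tanh := fun x y hxy => by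
  rwa [← artanh_lt_artanh_iff ⟨neg_one_lt_tanh x, tanh_lt_one x⟩ ⟨neg_one_lt_tanh y, tanh_lt_one y⟩,
    artanh_tanh, artanh_tanh]

theorem tanh_pos {x : ℝ} (hx : 0 < x) : 0 < tanh x := by
  simpa using tanh_strictMono hx

end Real

theorem mul_sub_add_div_sub_pos {C t T n : ℝ} (hC : 1 / 2 < C) (ht : 0 < t) (htT : t ≤ T)
    (hn : 2 ≤ n) : 0 < C * (n * T - t) + T / n - t := by
  have hn0 : 0 < n := by linarith
  have hscaled : n * (C * (n * T - t) + T / n - t) = C * (n ^ 2 * T - n * t) + T - n * t := by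
    field_simp
  have hgap : 0 < n ^ 2 * T - n * t := by nlinarith [mul_pos hn0 ht]
  have hhalf := mul_pos (sub_pos.mpr hC) hgap
  have hquad : 0 ≤ t * ((n - 1) * (n - 2)) := mul_nonneg ht.le (by nlinarith)
  have hmono : 0 ≤ (n ^ 2 + 2) * (T - t) := by nlinarith
  refine pos_of_mul_pos_right (a := n) ?_ hn0.le
  rw [hscaled]
  nlinarith

theorem E_pos_general (h k C : ℝ) (hh : h > 0) (hk : k > 0)
    (hChalf : C > 1/2) :
    ∀ n : ℕ, 2 ≤ n →
      C * ((n : ℝ) * Real.tanh (n * k * h) - Real.tanh (k * h))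
        + Real.tanh (n * k * h) / n - Real.tanh (k * h) > 0 := by
  intro n hn
  have hn2 : (2 : ℝ) ≤ n := by exact_mod_cast hn
  have hkh : 0 < k * h := mul_pos hk hh
  refine mul_sub_add_div_sub_pos hChalf (Real.tanh_pos hkh) (Real.tanh_strictMono.monotone ?_) hn2
  rw [mul_assoc]
  exact le_mul_of_one_le_left hkh.le (by linarith)

theorem E_pos (h k σ g C : ℝ) (hh : h > 0) (hk : k > 0) (hσ : σ > 0) (hg : g > 0)
    (hC : C = k^2 * σ / g) (hChalf : C > 1/2) :
    ∀ n : ℕ, 2 ≤ n →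
      C * ((n : ℝ) * Real.tanh (n * k * h) - Real.tanh (k * h))
        + Real.tanh (n * k * h) / n - Real.tanh (k * h) > 0 :=
  E_pos_general h k C hh hk hChalf
end

section
/- Fix σ > 0, g > 0, h > 0. The function λ(k) = (σk² + g)·tanh(kh)/k extends continuously to k = 0 with λ(0) = gh, and the condition σ/(gh²) > 1/3 is equivalent to the second derivative of this extension being positive at 0. -/
/-!
Put `P k = (σ k² + g) tanh (k h)`. Since `P 0 = 0` and `P' 0 = g h`, the extended `λ` is exactly
`dslope P 0`; the limit at `0⁺` is then the definition of `P' 0`. As `P` is analytic, so is `λ`,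
and differentiating `P k = P 0 + k λ(k)` three times at `0` gives `P''' 0 = 3 λ'' 0`. Leibniz's
rule together with `tanh' 0 = 1`, `tanh'' 0 = 0`, `tanh''' 0 = -2` gives
`λ'' 0 = 2 h (σ - g h² / 3)`.
-/

section DSlope

variable {𝕜 : Type*} [NontriviallyNormedField 𝕜] {f : 𝕜 → 𝕜} {a : 𝕜}

theorem AnalyticAt.dslope (hf : AnalyticAt 𝕜 f a) : AnalyticAt 𝕜 (dslope f a) a :=
  let ⟨_, hp⟩ := hf
  hp.has_fpower_series_dslope_fslope.analyticAt

theorem iteratedDeriv_sub_const_self (n : ℕ) :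
    iteratedDeriv n (fun x => x - a) a = if n = 1 then 1 else 0 := by
  simp only [iteratedDeriv_comp_sub_const (f := fun x => x), sub_self, iteratedDeriv_fun_id_zero]

theorem iteratedDeriv_succ_eq_mul_iteratedDeriv_dslope [CompleteSpace 𝕜] (n : ℕ)
    (hf : AnalyticAt 𝕜 f a) :
    iteratedDeriv (n + 1) f a = (n + 1) * iteratedDeriv n (dslope f a) a := by
  have hf_eq : f = fun x => f a + (x - a) * dslope f a x := by
    funext x
    rw [← smul_eq_mul, sub_smul_dslope, add_sub_cancel]
  conv_lhs => rw [hf_eq]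
  rw [iteratedDeriv_const_add n.succ_pos,
    iteratedDeriv_fun_mul (by fun_prop) hf.dslope.contDiffAt, Finset.sum_eq_single 1]
  · simp [iteratedDeriv_sub_const_self]
  · intro i _ hi
    simp [iteratedDeriv_sub_const_self, hi]
  · simp

end DSlope

namespace Real

theorem hasDerivAt_tanh_s11 (x : ℝ) : HasDerivAt tanh (1 - tanh x ^ 2) x := by
  have h := (hasDerivAt_sinh x).div (hasDerivAt_cosh x) (cosh_pos x).ne'
  rw [← show tanh = sinh / cosh from funext tanh_eq_sinh_div_cosh] at h
  refine h.congr_deriv ?_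
  rw [tanh_eq_sinh_div_cosh]
  field_simp

theorem deriv_tanh : deriv tanh = fun x => 1 - tanh x ^ 2 :=
  funext fun x => (hasDerivAt_tanh_s11 x).deriv

@[fun_prop]
theorem analyticAt_tanh {x : ℝ} : AnalyticAt ℝ tanh x := by
  rw [show tanh = sinh / cosh from funext tanh_eq_sinh_div_cosh]
  exact analyticAt_sinh.div analyticAt_cosh (cosh_pos x).ne'

@[fun_prop]
theorem contDiff_tanh {n : WithTop ℕ∞} : ContDiff ℝ n tanh :=
  contDiff_iff_contDiffAt.mpr fun _ => analyticAt_tanh.contDiffAt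

theorem deriv_deriv_tanh : deriv (deriv tanh) = fun x => -2 * tanh x * (1 - tanh x ^ 2) := by
  funext x
  rw [deriv_tanh]
  exact (((hasDerivAt_tanh_s11 x).pow 2).const_sub 1).deriv.trans (by ring)

theorem iteratedDeriv_two_tanh_zero : iteratedDeriv 2 tanh 0 = 0 := by
  rw [iteratedDeriv_succ, iteratedDeriv_one, deriv_deriv_tanh]
  simp

theorem iteratedDeriv_three_tanh_zero : iteratedDeriv 3 tanh 0 = -2 := by
  rw [iteratedDeriv_succ, iteratedDeriv_succ, iteratedDeriv_one, deriv_deriv_tanh]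
  have h := ((hasDerivAt_tanh_s11 0).const_mul (-2)).fun_mul (((hasDerivAt_tanh_s11 0).pow 2).const_sub 1)
  simpa using h.deriv

end Real

open Real

section QuadraticMulTanh

variable (σ g h : ℝ)

theorem hasDerivAt_quadratic_mul_tanh_zero :
    HasDerivAt (fun k => (σ * k ^ 2 + g) * tanh (k * h)) (g * h) 0 := by
  refine ((((hasDerivAt_pow 2 (0 : ℝ)).const_mul σ).add_const g).fun_mul
    ((hasDerivAt_tanh_s11 (0 * h)).comp 0 (hasDerivAt_mul_const h))).congr_deriv ?_
  simp

theorem analyticAt_quadratic_mul_tanh (x : ℝ) :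
    AnalyticAt ℝ (fun k => (σ * k ^ 2 + g) * tanh (k * h)) x := by
  fun_prop

theorem iteratedDeriv_quadratic_zero (i : ℕ) :
    iteratedDeriv i (fun k : ℝ => σ * k ^ 2 + g) 0 =
      σ * (if i = 2 then 2 else 0) + (if i = 0 then g else 0) := by
  rw [iteratedDeriv_fun_add (by fun_prop) (by fun_prop), iteratedDeriv_const_mul_field,
    iteratedDeriv_fun_pow_zero, iteratedDeriv_const]
  norm_num

theorem iteratedDeriv_tanh_mul_const_zero (i : ℕ) :
    iteratedDeriv i (fun k => tanh (k * h)) 0 = h ^ i * iteratedDeriv i tanh 0 := by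
  simp_rw [mul_comm _ h]
  simpa using congrFun (iteratedDeriv_comp_const_mul contDiff_tanh h) 0

theorem iteratedDeriv_three_quadratic_mul_tanh_zero :
    iteratedDeriv 3 (fun k => (σ * k ^ 2 + g) * tanh (k * h)) 0 = 6 * σ * h - 2 * g * h ^ 3 := by
  rw [iteratedDeriv_fun_mul (by fun_prop) (by fun_prop)]
  simp [Finset.sum_range_succ, iteratedDeriv_quadratic_zero, iteratedDeriv_tanh_mul_const_zero,
    deriv_tanh, iteratedDeriv_two_tanh_zero, iteratedDeriv_three_tanh_zero]
  ring

end QuadraticMulTanh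

theorem lambda_extension_general (σ g h : ℝ) (hg : g > 0) (hh : h > 0)
    (lam : ℝ → ℝ)
    (hlam0 : lam 0 = g * h)
    (hlam : ∀ k : ℝ, k ≠ 0 → lam k = (σ * k^2 + g) * Real.tanh (k * h) / k) :
    Filter.Tendsto (fun k : ℝ => (σ * k^2 + g) * Real.tanh (k * h) / k)
      (nhdsWithin 0 (Set.Ioi 0)) (nhds (g * h)) ∧
    (σ / (g * h^2) > 1/3 ↔ deriv (deriv lam) 0 > 0) := by
  set P : ℝ → ℝ := fun k => (σ * k ^ 2 + g) * tanh (k * h)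
  have hP : HasDerivAt P (g * h) 0 := hasDerivAt_quadratic_mul_tanh_zero σ g h
  have hslope (k : ℝ) : slope P 0 k = (σ * k ^ 2 + g) * tanh (k * h) / k := by
    simp [slope_def_field, P]
  have hlam_eq : lam = dslope P 0 := by
    funext k
    rcases eq_or_ne k 0 with rfl | hk
    · rw [hlam0, dslope_same, hP.deriv]
    · rw [hlam k hk, dslope_of_ne _ hk, hslope]
  refine ⟨?_, ?_⟩
  · refine ((hasDerivAt_iff_tendsto_slope.mp hP).mono_left ?_).congr hslope
    exact nhdsWithin_mono _ fun k hk => ne_of_gt hk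
  · have hlam'' : deriv (deriv lam) 0 = 2 * h * (σ - 1 / 3 * (g * h ^ 2)) := by
      have h3 := iteratedDeriv_succ_eq_mul_iteratedDeriv_dslope 2
        (analyticAt_quadratic_mul_tanh σ g h 0)
      rw [iteratedDeriv_three_quadratic_mul_tanh_zero, ← hlam_eq, iteratedDeriv_succ,
        iteratedDeriv_one] at h3
      norm_num at h3
      linarith
    rw [hlam'', gt_iff_lt, gt_iff_lt, lt_div_iff₀ (by positivity),
      mul_pos_iff_of_pos_left (by positivity), sub_pos]

theorem lambda_extension (σ g h : ℝ) (hσ : σ > 0) (hg : g > 0) (hh : h > 0)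
    (lam : ℝ → ℝ)
    (hlam0 : lam 0 = g * h)
    (hlam : ∀ k : ℝ, k ≠ 0 → lam k = (σ * k^2 + g) * Real.tanh (k * h) / k) :
    Filter.Tendsto (fun k : ℝ => (σ * k^2 + g) * Real.tanh (k * h) / k)
      (nhdsWithin 0 (Set.Ioi 0)) (nhds (g * h)) ∧
    (σ / (g * h^2) > 1/3 ↔ deriv (deriv lam) 0 > 0) :=
  lambda_extension_general σ g h hg hh lam hlam0 hlam
end
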